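/- Let p: T → W be a birational morphism of smooth projective surfaces, a composition of s blow-ups, and let Δ_1, ..., Δ_k be disjoint A-D-E configurations of type A_{m_1}, ..., A_{m_k} all contracted by p. Then Σ_{i=1}^k (m_i + 1) ≤ s. In particular, the number k of disjoint irreducible -2-curves contracted by p satisfies 2k ≤ s. -/

import Mathlib

/-- An abstract smooth complex projective surface: its group of divisors with
intersection pairing, canonical divisor, effective cone, irreducible curves,
arithmetic genus (satisfying adjunction), and cohomology dimensions
`h⁰(D, O_D)`, `h¹(D, O_D)`, `h⁰(D, ω_D)`. -/
structure Surface where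
  Div : Type
  grp : AddCommGroup Div
  inter : Div → Div → ℤ
  inter_comm : ∀ A B, inter A B = inter B A
  inter_add_left : ∀ A B C, inter (A + B) C = inter A C + inter B C
  K : Div
  Eff : Div → Prop
  eff_zero : Eff 0
  eff_add : ∀ {A B}, Eff A → Eff B → Eff (A + B)
  Irr : Div → Prop
  irr_curve : ∀ {A}, Irr A → Eff A ∧ A ≠ 0
  pa : Div → ℤ
  adjunction : ∀ D, 2 * pa D - 2 = inter K D + inter D D
  h0O : Div → ℕ
  h1O : Div → ℕ
  h0ω : Div → ℕ
  pa_def : ∀ D, (1 : ℤ) - pa D = (h0O D : ℤ) - (h1O D : ℤ)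
  serre : ∀ D, h0ω D = h1O D

attribute [instance] Surface.grp

/-- A curve is a nonzero effective divisor. -/
def Surface.Curve (S : Surface) (D : S.Div) : Prop := S.Eff D ∧ D ≠ 0

/-- `D` is 1-connected: it is a curve and every decomposition `D = A + B`
into curves satisfies `A·B ≥ 1`. -/
def Surface.OneConnected (S : Surface) (D : S.Div) : Prop :=
  S.Curve D ∧ ∀ A B : S.Div, S.Curve A → S.Curve B → A + B = D → 1 ≤ S.inter A B

/-- The data of a birational morphism `p : T → W` of smooth projective surfaces,
a composition of `s` blow-ups, recorded on the source surface `S = T`: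
the total exceptional divisors `E 1, …, E s` (total transforms of the exceptional
curves of the blow-ups), the pullback `pK = p*K_W` of the canonical divisor of `W`,
and the predicate `Exc` of being supported on the `p`-exceptional locus
(i.e. contracted by `p` to a finite set of points). -/
structure Blowdown (S : Surface) (s : ℕ) where
  E : Fin s → S.Div
  pK : S.Div
  Exc : S.Div → Prop
  exc_zero : Exc 0
  exc_sub : ∀ {A B}, Exc A → Exc B → Exc (A - B)
  exc_E : ∀ i, Exc (E i)
  exc_comp : ∀ {D Γ}, Exc D → S.Eff D → S.Irr Γ → S.Eff (D - Γ) → Exc Γ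
  E_curve : ∀ i, S.Curve (E i)
  K_eq : S.K = pK + ∑ i, E i
  pK_exc : ∀ {D}, Exc D → S.inter pK D = 0
  EE : ∀ i j, S.inter (E i) (E j) = if i = j then -1 else 0
  negdef : ∀ {D}, Exc D → D ≠ 0 → S.inter D D < 0
  exc_span : ∀ {D}, Exc D → (∀ i, S.inter D (E i) = 0) → D = 0

/-- The dual graph of a configuration of irreducible curves `C i`: vertices are the
curves, and two distinct curves are adjacent when they meet (intersection number 1). -/
def configGraph (S : Surface) {n : ℕ} (C : Fin n → S.Div) : SimpleGraph (Fin n) where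
  Adj i j := i ≠ j ∧ S.inter (C i) (C j) = 1
  symm := ⟨fun i j hij => ⟨hij.1.symm, by rw [S.inter_comm]; exact hij.2⟩⟩
  loopless := ⟨fun i hi => hi.1 rfl⟩

/-- An A-D-E configuration on `S`: a reduced divisor `∑ C i` whose components `C i`
are distinct `-2`-curves (irreducible, `C i² = -2`, `K·C i = 0`), meeting pairwise
transversally in at most one point, whose dual graph is a tree (connected and acyclic)
and whose intersection matrix is negative definite; these conditions characterize the
configurations whose dual graph is a Dynkin diagram of type Aₙ, Dₙ or Eₙ. -/
structure ADEConfig (S : Surface) where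
  n : ℕ
  npos : 0 < n
  C : Fin n → S.Div
  irr : ∀ i, S.Irr (C i)
  inj : Function.Injective C
  sq : ∀ i, S.inter (C i) (C i) = -2
  KC : ∀ i, S.inter S.K (C i) = 0
  int01 : ∀ i j, i ≠ j → S.inter (C i) (C j) = 0 ∨ S.inter (C i) (C j) = 1
  tree : (configGraph S C).IsTree
  negdef : ∀ a : Fin n → ℤ, a ≠ 0 → ∑ i, ∑ j, a i * a j * S.inter (C i) (C j) < 0

/-- The configuration is of type `Aₙ`: its dual graph is a path. -/
def ADEConfig.IsTypeA {S : Surface} (Δ : ADEConfig S) : Prop :=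
  ∃ e : Fin Δ.n ≃ Fin Δ.n, ∀ i j : Fin Δ.n,
    (configGraph S Δ.C).Adj (e i) (e j) ↔ ((i : ℕ) + 1 = (j : ℕ) ∨ (j : ℕ) + 1 = (i : ℕ))

/-!
Intersecting with the total exceptional divisors `E₁, …, E_s` identifies the `p`-exceptional
divisors with a sublattice of `ℤˢ` carrying minus the standard dot product, and `K·D` becomes the
coordinate sum of `D`. A `(-2)`-curve `C` with `K·C = 0` therefore becomes a root `eᵢ - eⱼ`
of `A_{s-1}`. The roots of one configuration are linearly independent, since its intersection
matrix is negative definite, and have coordinate sum zero, so a configuration of `m` curves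
involves at least `m + 1` coordinates. Orthogonal roots involve disjoint coordinates, so distinct
configurations involve disjoint sets of coordinates.
-/

namespace Surface

variable {S : Surface}

def interLeft (D : S.Div) : S.Div →+ ℤ :=
  AddMonoidHom.mk' (S.inter · D) fun A B => S.inter_add_left A B D

lemma inter_zero_left (D : S.Div) : S.inter 0 D = 0 := map_zero (S.interLeft D)

lemma inter_neg_left (A D : S.Div) : S.inter (-A) D = -S.inter A D :=
  map_neg (S.interLeft D) A

lemma inter_zsmul_left (z : ℤ) (A D : S.Div) : S.inter (z • A) D = z * S.inter A D :=
  map_zsmul (S.interLeft D) z A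

lemma inter_sum_left {ι : Type*} (t : Finset ι) (f : ι → S.Div) (D : S.Div) :
    S.inter (∑ i ∈ t, f i) D = ∑ i ∈ t, S.inter (f i) D :=
  map_sum (S.interLeft D) f t

lemma inter_sum_zsmul_sum_zsmul {ι : Type*} [Fintype ι] (c : ι → ℤ) (C : ι → S.Div) :
    S.inter (∑ a, c a • C a) (∑ b, c b • C b)
      = ∑ a, ∑ b, c a * c b * S.inter (C a) (C b) := by
  simp only [inter_sum_left, inter_zsmul_left, S.inter_comm (C _) (∑ b, _), Finset.mul_sum]
  rw [Finset.sum_comm]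
  exact Finset.sum_congr rfl fun _ _ => Finset.sum_congr rfl fun _ _ => by ring

end Surface

namespace Blowdown

variable {S : Surface} {s : ℕ} (B : Blowdown S s)

def excSubgroup : AddSubgroup S.Div :=
  AddSubgroup.ofSub {D | B.Exc D} ⟨0, B.exc_zero⟩ fun _ hA _ hC => by
    simpa [sub_eq_add_neg] using B.exc_sub hA hC

def coord : S.Div →+ (Fin s → ℤ) :=
  AddMonoidHom.mk' (fun D t => S.inter D (B.E t)) fun A C => by
    funext t; exact S.inter_add_left A C (B.E t)

@[simp]
lemma coord_apply (D : S.Div) (t : Fin s) : B.coord D t = S.inter D (B.E t) := rfl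

lemma eq_neg_sum_coord_smul {D : S.Div} (hD : B.Exc D) :
    D = -∑ t, B.coord D t • B.E t := by
  rw [eq_neg_iff_add_eq_zero]
  refine B.exc_span ?_ fun u => ?_
  · exact B.excSubgroup.add_mem hD
      (B.excSubgroup.sum_mem fun t _ => B.excSubgroup.zsmul_mem (B.exc_E t) _)
  · simp [S.inter_add_left, S.inter_sum_left, S.inter_zsmul_left, B.EE]

lemma coord_dotProduct_coord {D : S.Div} (hD : B.Exc D) (D' : S.Div) :
    B.coord D ⬝ᵥ B.coord D' = -S.inter D D' := by
  conv_rhs => rw [B.eq_neg_sum_coord_smul hD]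
  simp only [S.inter_neg_left, S.inter_sum_left, S.inter_zsmul_left, dotProduct, coord_apply,
    S.inter_comm (B.E _) D', neg_neg]

lemma sum_coord {D : S.Div} (hD : B.Exc D) : ∑ t, B.coord D t = S.inter S.K D := by
  simp only [B.K_eq, S.inter_add_left, B.pK_exc hD, zero_add, S.inter_sum_left, coord_apply,
    S.inter_comm (B.E _) D]

lemma linearIndependent_coord {ι : Type*} [Fintype ι] {C : ι → S.Div}
    (hexc : ∀ a, B.Exc (C a))
    (hneg : ∀ c : ι → ℤ, c ≠ 0 → ∑ a, ∑ b, c a * c b * S.inter (C a) (C b) < 0) :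
    LinearIndependent ℤ fun a => B.coord (C a) := by
  rw [Fintype.linearIndependent_iff]
  intro c hc
  by_contra! hne
  have hD : ∑ a, c a • C a = 0 := by
    refine B.exc_span (B.excSubgroup.sum_mem fun a _ => B.excSubgroup.zsmul_mem (hexc a) _)
      fun t => ?_
    simpa [S.inter_sum_left, S.inter_zsmul_left] using congrFun hc t
  have := hneg c (Function.ne_iff.mpr hne)
  rw [← S.inter_sum_zsmul_sum_zsmul, hD, S.inter_zero_left] at this
  exact this.false

end Blowdown

section Roots

variable {α : Type*} [Fintype α]

lemma exists_eq_one_of_sum_eq_zero {v : α → ℤ} (hsum : ∑ t, v t = 0) (hsq : v ⬝ᵥ v = 2) :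
    ∃ i, v i = 1 := by
  have hle : ∀ t, v t * v t ≤ 2 := fun t =>
    hsq ▸ Finset.single_le_sum (f := fun t => v t * v t) (fun t _ => mul_self_nonneg (v t))
      (Finset.mem_univ t)
  obtain ⟨i, hi⟩ : ∃ i, 0 < v i := by
    by_contra! hnonpos
    have hzero := (Finset.sum_eq_zero_iff_of_nonpos fun t _ => hnonpos t).mp hsum
    simp [dotProduct, hzero] at hsq
  exact ⟨i, by nlinarith [hle i]⟩

lemma exists_eq_single_sub_single [DecidableEq α] {v : α → ℤ} (hsum : ∑ t, v t = 0) (hsq : v ⬝ᵥ v = 2) :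
    ∃ i j, v = Pi.single i 1 - Pi.single j 1 := by
  obtain ⟨i, hi⟩ := exists_eq_one_of_sum_eq_zero hsum hsq
  obtain ⟨j, hj⟩ := exists_eq_one_of_sum_eq_zero (v := -v) (by simp [hsum]) (by simp [hsq])
  rw [Pi.neg_apply, neg_eq_iff_eq_neg] at hj
  have hij : i ≠ j := by rintro rfl; omega
  refine ⟨i, j, sub_eq_zero.mp (dotProduct_self_eq_zero.mp ?_)⟩
  simp [dotProduct_sub, sub_dotProduct, hsq, hi, hj, hij, hij.symm]

lemma disjoint_support_of_dotProduct_eq_zero {v w : α → ℤ} (hv : ∑ t, v t = 0)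
    (hv2 : v ⬝ᵥ v = 2) (hw : ∑ t, w t = 0) (hw2 : w ⬝ᵥ w = 2) (hvw : v ⬝ᵥ w = 0) :
    Disjoint (Function.support v) (Function.support w) := by
  classical
  obtain ⟨i, j, rfl⟩ := exists_eq_single_sub_single hv hv2
  obtain ⟨k, l, rfl⟩ := exists_eq_single_sub_single hw hw2
  rw [Set.disjoint_left]
  intro t ht ht'
  simp only [Function.mem_support, Pi.sub_apply, Pi.single_apply] at ht ht'
  simp only [dotProduct_sub, sub_dotProduct, single_dotProduct, Pi.single_apply] at hvw
  split_ifs at ht ht' hvw <;> subst_vars <;> simp_all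

end Roots

section Rank

variable {ι α : Type*} [Fintype ι] [Fintype α]

def jointSupport (r : ι → α → ℤ) : Finset α :=
  Finset.univ.filter fun t => ∃ a, r a t ≠ 0

lemma LinearIndependent.card_lt_card_jointSupport [Nonempty ι] {r : ι → α → ℤ}
    (hr : LinearIndependent ℤ r) (hsum : ∀ a, ∑ t, r a t = 0) :
    Fintype.card ι < (jointSupport r).card := by
  classical
  obtain ⟨t₀, ht₀⟩ : (jointSupport r).Nonempty := by
    obtain ⟨a⟩ := ‹Nonempty ι›
    obtain ⟨t, ht⟩ := Function.ne_iff.mp (hr.ne_zero a)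
    exact ⟨t, Finset.mem_filter.mpr ⟨Finset.mem_univ t, a, ht⟩⟩
  let W := (jointSupport r).erase t₀
  -- Forgetting the coordinate `t₀` loses nothing: it is determined by the coordinate sum.
  have hrestrict : LinearIndependent ℤ fun a (t : W) => r a t := by
    rw [Fintype.linearIndependent_iff] at hr ⊢
    intro c hc
    refine hr c ?_
    set x := ∑ a, c a • r a
    have hoff : ∀ u ≠ t₀, x u = 0 := by
      intro u hu
      by_cases hmem : u ∈ jointSupport r
      · simpa [x] using congrFun hc ⟨u, Finset.mem_erase.mpr ⟨hu, hmem⟩⟩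
      · simp only [jointSupport, Finset.mem_filter, not_and, not_exists, not_not] at hmem
        simp [x, hmem]
    have htotal : ∑ u, x u = 0 := by
      simp only [x, Finset.sum_apply, Pi.smul_apply, smul_eq_mul]
      rw [Finset.sum_comm]
      simp [← Finset.mul_sum, hsum]
    funext t
    by_cases ht : t = t₀
    · rw [ht, Pi.zero_apply, ← htotal,
        Finset.sum_eq_single t₀ (fun u _ hu => hoff u hu) (by simp)]
    · exact hoff t ht
  calc Fintype.card ι ≤ Module.finrank ℤ (W → ℤ) := hrestrict.fintype_card_le_finrank
    _ = W.card := by rw [Module.finrank_fintype_fun_eq_card, Fintype.card_coe]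
    _ < (jointSupport r).card := Finset.card_erase_lt_of_mem ht₀

end Rank

namespace Blowdown

variable {S : Surface} {s : ℕ} (B : Blowdown S s)

lemma card_lt_card_jointSupport {ι : Type*} [Fintype ι] [Nonempty ι] {C : ι → S.Div}
    (hexc : ∀ a, B.Exc (C a)) (hK : ∀ a, S.inter S.K (C a) = 0)
    (hneg : ∀ c : ι → ℤ, c ≠ 0 → ∑ a, ∑ b, c a * c b * S.inter (C a) (C b) < 0) :
    Fintype.card ι < (jointSupport fun a => B.coord (C a)).card :=
  (B.linearIndependent_coord hexc hneg).card_lt_card_jointSupport fun a =>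
    (B.sum_coord (hexc a)).trans (hK a)

lemma disjoint_jointSupport {ι κ : Type*} [Fintype ι] [Fintype κ] {C : ι → S.Div}
    {C' : κ → S.Div} (hexc : ∀ a, B.Exc (C a)) (hexc' : ∀ b, B.Exc (C' b))
    (hsq : ∀ a, S.inter (C a) (C a) = -2) (hsq' : ∀ b, S.inter (C' b) (C' b) = -2)
    (hK : ∀ a, S.inter S.K (C a) = 0) (hK' : ∀ b, S.inter S.K (C' b) = 0)
    (horth : ∀ a b, S.inter (C a) (C' b) = 0) :
    Disjoint (jointSupport fun a => B.coord (C a)) (jointSupport fun b => B.coord (C' b)) := by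
  rw [Finset.disjoint_left]
  intro t ht ht'
  obtain ⟨a, ha⟩ := (Finset.mem_filter.mp ht).2
  obtain ⟨b, hb⟩ := (Finset.mem_filter.mp ht').2
  have hroots := disjoint_support_of_dotProduct_eq_zero
    ((B.sum_coord (hexc a)).trans (hK a))
    (by rw [B.coord_dotProduct_coord (hexc a), hsq a, neg_neg])
    ((B.sum_coord (hexc' b)).trans (hK' b))
    (by rw [B.coord_dotProduct_coord (hexc' b), hsq' b, neg_neg])
    (by rw [B.coord_dotProduct_coord (hexc a), horth a b, neg_zero])
  exact Set.disjoint_left.mp hroots ha hb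

theorem sum_card_add_one_le {κ : Type*} [Fintype κ] {ι : κ → Type*} [∀ i, Fintype (ι i)]
    [∀ i, Nonempty (ι i)] (C : ∀ i, ι i → S.Div) (hexc : ∀ i a, B.Exc (C i a))
    (hsq : ∀ i a, S.inter (C i a) (C i a) = -2) (hK : ∀ i a, S.inter S.K (C i a) = 0)
    (hneg : ∀ i, ∀ c : ι i → ℤ, c ≠ 0 → ∑ a, ∑ b, c a * c b * S.inter (C i a) (C i b) < 0)
    (horth : ∀ i j, i ≠ j → ∀ a b, S.inter (C i a) (C j b) = 0) :
    ∑ i, (Fintype.card (ι i) + 1) ≤ s := by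
  classical
  let V i := jointSupport fun a => B.coord (C i a)
  have hdisj : (↑(Finset.univ : Finset κ) : Set κ).PairwiseDisjoint V := fun i _ j _ hij =>
    B.disjoint_jointSupport (hexc i) (hexc j) (hsq i) (hsq j) (hK i) (hK j) (horth i j hij)
  calc ∑ i, (Fintype.card (ι i) + 1)
      ≤ ∑ i, (V i).card := Finset.sum_le_sum fun i _ =>
        B.card_lt_card_jointSupport (hexc i) (hK i) (hneg i)
    _ = (Finset.univ.biUnion V).card := (Finset.card_biUnion hdisj).symm
    _ ≤ s := (Finset.card_le_univ _).trans_eq (Fintype.card_fin s)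

end Blowdown

/-- if `Δ₁, …, Δ_k` are disjoint A-D-E configurations of type
`A_{m₁}, …, A_{m_k}` all contracted by `p` (a composition of `s` blow-ups), then
`∑ (mᵢ + 1) ≤ s`. In particular, `k` disjoint irreducible `-2`-curves contracted
by `p` satisfy `2k ≤ s`. -/
theorem stmt17 (S : Surface) (s : ℕ) (B : Blowdown S s) :
    (∀ (k : ℕ) (Δ : Fin k → ADEConfig S),
      (∀ i, (Δ i).IsTypeA) →
      (∀ i a, B.Exc ((Δ i).C a)) →
      (∀ i j, i ≠ j → ∀ a b,
        (Δ i).C a ≠ (Δ j).C b ∧ S.inter ((Δ i).C a) ((Δ j).C b) = 0) →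
      ∑ i, ((Δ i).n + 1) ≤ s) ∧
    (∀ (k : ℕ) (N : Fin k → S.Div),
      (∀ i, S.Irr (N i) ∧ S.inter (N i) (N i) = -2 ∧ S.inter S.K (N i) = 0 ∧
        B.Exc (N i)) →
      (∀ i j, i ≠ j → N i ≠ N j ∧ S.inter (N i) (N j) = 0) →
      2 * k ≤ s) := by
  constructor
  · intro k Δ _ hexc hdisj
    have (i : Fin k) : Nonempty (Fin (Δ i).n) := Fin.pos_iff_nonempty.mp (Δ i).npos
    simpa using B.sum_card_add_one_le (fun i => (Δ i).C) hexc (fun i => (Δ i).sq)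
      (fun i => (Δ i).KC) (fun i => (Δ i).negdef) fun i j hij a b => (hdisj i j hij a b).2
  · intro k N hN hdisj
    have hneg (i : Fin k) (c : Unit → ℤ) (hc : c ≠ 0) :
        ∑ a, ∑ b, c a * c b * S.inter (N i) (N i) < 0 := by
      have hc' : c () ≠ 0 := fun h => hc (funext fun _ => h)
      simp only [Finset.univ_unique, Finset.sum_singleton, PUnit.default_eq_unit, (hN i).2.1]
      nlinarith [mul_self_pos.mpr hc']
    simpa [mul_comm] using B.sum_card_add_one_le (fun i (_ : Unit) => N i)
      (fun i _ => (hN i).2.2.2) (fun i _ => (hN i).2.1) (fun i _ => (hN i).2.2.1) hneg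
      fun i j hij _ _ => (hdisj i j hij).2
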